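/- Let k ≥ 2 be an integer, let c > 0 and 0 ≤ β < 1 be reals, and set α = (1 + β)/2. Let G be a finite simple graph on n ≥ 1 vertices with at most c·n^{1+β} edges. Then f_k(G) ≤ (k − 1 + 2c)·n^{α}. -/
import Mathlib


open Finset

variable {V : Type*}

open scoped Classical in
/-- Degree of `v` in the subgraph of `G` induced on the vertex set `A`
(number of neighbours of `v` inside `A`). -/
noncomputable def degOn (G : SimpleGraph V) (A : Finset V) (v : V) : ℕ :=
  (A.filter fun w => G.Adj v w).card

/-- Maximum degree of the subgraph of `G` induced on `A`. -/
noncomputable def maxDegOn (G : SimpleGraph V) (A : Finset V) : ℕ :=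
  A.sup (degOn G A)

open scoped Classical in
/-- The subgraph of `G` induced on `A` has fewer than `k` vertices or at least `k`
vertices realising its maximum degree. -/
def equates (G : SimpleGraph V) (k : ℕ) (A : Finset V) : Prop :=
  A.card < k ∨ k ≤ (A.filter fun v => degOn G A v = maxDegOn G A).card

open scoped Classical in
/-- `f_k` of the subgraph of `G` induced on `A`: the minimum number of vertices of `A`
whose deletion leaves an induced subgraph with fewer than `k` vertices or with at
least `k` vertices realising its maximum degree. -/
noncomputable def fkOn (G : SimpleGraph V) (k : ℕ) (A : Finset V) : ℕ :=
  sInf {m | ∃ S, S ⊆ A ∧ S.card = m ∧ equates G k (A \ S)}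

/-- `f_k(G)`. -/
noncomputable def fk [Fintype V] (G : SimpleGraph V) (k : ℕ) : ℕ :=
  fkOn G k Finset.univ

/-- `diff` of the subgraph of `G` induced on `A`: the largest degree minus the
second-largest degree (with multiplicity) of this subgraph. -/
noncomputable def diffOn (G : SimpleGraph V) (A : Finset V) : ℕ :=
  maxDegOn G A - ((A.val.map (degOn G A)).erase (maxDegOn G A)).sup

/-- `diff(G) = d₁ - d₂`, the difference between the largest and second-largest
vertex degrees of `G`. -/
noncomputable def diffDeg [Fintype V] (G : SimpleGraph V) : ℕ :=
  diffOn G Finset.univ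

section Aux

open scoped Classical

lemma degOn_mono (G : SimpleGraph V) {A B : Finset V} (h : A ⊆ B) (v : V) :
    degOn G A v ≤ degOn G B v :=
  Finset.card_le_card (Finset.filter_subset_filter _ h)

lemma degOn_le_maxDegOn (G : SimpleGraph V) {A : Finset V} {v : V} (hv : v ∈ A) :
    degOn G A v ≤ maxDegOn G A := Finset.le_sup hv

lemma fkOn_le (G : SimpleGraph V) (k : ℕ) {A S : Finset V} (hS : S ⊆ A)
    (h : equates G k (A \ S)) : fkOn G k A ≤ S.card :=
  Nat.sInf_le ⟨S, hS, rfl, h⟩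

lemma fkOn_set_nonempty (G : SimpleGraph V) (k : ℕ) (hk : 0 < k) (A : Finset V) :
    {m | ∃ S, S ⊆ A ∧ S.card = m ∧ equates G k (A \ S)}.Nonempty := by
  refine ⟨A.card, A, Finset.Subset.refl A, rfl, ?_⟩
  left
  simp [hk]

lemma fkOn_le_add (G : SimpleGraph V) (k : ℕ) (hk : 0 < k)
    {A B : Finset V} (hB : B ⊆ A) :
    fkOn G k A ≤ B.card + fkOn G k (A \ B) := by
  have hmem := Nat.sInf_mem (fkOn_set_nonempty G k hk (A \ B))
  obtain ⟨S', hS'sub, hS'card, hS'eq⟩ := hmem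
  have hsub : B ∪ S' ⊆ A := by
    apply Finset.union_subset hB
    exact hS'sub.trans (Finset.sdiff_subset)
  have hdiff : A \ (B ∪ S') = (A \ B) \ S' := by
    ext v; simp; tauto
  have h1 : fkOn G k A ≤ (B ∪ S').card := by
    apply fkOn_le G k hsub
    rw [hdiff]; exact hS'eq
  calc fkOn G k A ≤ (B ∪ S').card := h1
    _ ≤ B.card + S'.card := Finset.card_union_le _ _
    _ = B.card + fkOn G k (A \ B) := by rw [hS'card]; rfl

lemma equates_of_maxDegOn_zero (G : SimpleGraph V) (k : ℕ) (hk : 0 < k)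
    {A : Finset V} (h : maxDegOn G A = 0) : equates G k A := by
  rcases lt_or_ge A.card k with h1 | h1
  · exact Or.inl h1
  · right
    have : A.filter (fun v => degOn G A v = maxDegOn G A) = A := by
      apply Finset.filter_true_of_mem
      intro v hv
      have := degOn_le_maxDegOn G hv
      omega
    rw [this]; exact h1

lemma fkOn_le_aux (G : SimpleGraph V) (k : ℕ) (hk : 0 < k) :
    ∀ D : ℕ, ∀ A : Finset V, maxDegOn G A ≤ D → fkOn G k A ≤ (k - 1) * D := by
  intro D
  induction D with
  | zero =>
    intro A hA
    have h0 : maxDegOn G A = 0 := Nat.le_zero.mp hA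
    have : fkOn G k A ≤ (∅ : Finset V).card := by
      apply fkOn_le G k (Finset.empty_subset A)
      rw [Finset.sdiff_empty]
      exact equates_of_maxDegOn_zero G k hk h0
    simpa using this
  | succ D ih =>
    intro A hA
    set M := A.filter (fun v => degOn G A v = maxDegOn G A) with hM
    rcases le_or_gt k M.card with hMk | hMk
    · -- already equates with S = ∅
      have : fkOn G k A ≤ (∅ : Finset V).card := by
        apply fkOn_le G k (Finset.empty_subset A)
        rw [Finset.sdiff_empty]
        exact Or.inr hMk
      simp at this
      omega
    · rcases le_or_gt (maxDegOn G A) D with hD | hD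
      · have := ih A hD
        calc fkOn G k A ≤ (k - 1) * D := this
          _ ≤ (k - 1) * (D + 1) := Nat.mul_le_mul_left _ (Nat.le_succ D)
      · -- maxDegOn G A = D + 1
        have hmax : maxDegOn G A = D + 1 := le_antisymm hA hD
        have hMsub : M ⊆ A := Finset.filter_subset _ _
        have hA' : maxDegOn G (A \ M) ≤ D := by
          apply Finset.sup_le
          intro v hv
          have hvA : v ∈ A := (Finset.mem_sdiff.mp hv).1
          have hvM : v ∉ M := (Finset.mem_sdiff.mp hv).2
          have hne : degOn G A v ≠ maxDegOn G A := by
            intro h; exact hvM (Finset.mem_filter.mpr ⟨hvA, h⟩)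
          have hle : degOn G A v ≤ maxDegOn G A := degOn_le_maxDegOn G hvA
          have h1 : degOn G (A \ M) v ≤ degOn G A v :=
            degOn_mono G (Finset.sdiff_subset) v
          omega
        have := ih (A \ M) hA'
        have h2 := fkOn_le_add G k hk hMsub
        have h3 : M.card ≤ k - 1 := by omega
        calc fkOn G k A ≤ M.card + fkOn G k (A \ M) := h2
          _ ≤ (k - 1) + (k - 1) * D := Nat.add_le_add h3 this
          _ = (k - 1) * (D + 1) := by ring

end Aux

/-- Let `k ≥ 2`, `c > 0`, `0 ≤ β < 1` and `α = (1 + β)/2`.  If `G` is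
a graph on `n ≥ 1` vertices with at most `c · n^(1+β)` edges, then
`f_k(G) ≤ (k - 1 + 2c) · n^α`. -/
theorem stmt15 {V : Type*} [Fintype V] (G : SimpleGraph V) (k : ℕ) (hk : 2 ≤ k)
    (c β : ℝ) (hc : 0 < c) (hβ0 : 0 ≤ β) (hβ1 : β < 1)
    (hn : 1 ≤ Fintype.card V)
    (he : (Nat.card G.edgeSet : ℝ) ≤ c * (Fintype.card V : ℝ) ^ (1 + β)) :
    (fk G k : ℝ) ≤ ((k : ℝ) - 1 + 2 * c) * (Fintype.card V : ℝ) ^ ((1 + β) / 2) := by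
  classical
  set n := Fintype.card V with hn_def
  set α : ℝ := (1 + β) / 2 with hα_def
  have hn1 : (1 : ℝ) ≤ (n : ℝ) := by exact_mod_cast hn
  have hn0 : (0 : ℝ) < (n : ℝ) := by linarith
  have hα0 : 0 ≤ α := by rw [hα_def]; linarith
  have hx1 : (1 : ℝ) ≤ (n : ℝ) ^ α := Real.one_le_rpow hn1 hα0
  have hx0 : (0 : ℝ) < (n : ℝ) ^ α := by linarith
  set r : ℕ := ⌈(n : ℝ) ^ α⌉₊ with hr_def
  have hr1 : 1 ≤ r := by
    rw [hr_def]
    exact Nat.one_le_ceil_iff.mpr hx0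
  have hrx : (n : ℝ) ^ α ≤ (r : ℝ) := Nat.le_ceil _
  have hrx' : (r : ℝ) < (n : ℝ) ^ α + 1 := Nat.ceil_lt_add_one (le_of_lt hx0)
  set B : Finset V := Finset.univ.filter (fun v => r ≤ degOn G Finset.univ v) with hB_def
  -- Sum of degrees equals twice the number of edges
  have hdeg : ∀ v : V, degOn G Finset.univ v = G.degree v := by
    intro v
    rw [degOn]
    congr 1
    rw [SimpleGraph.neighborFinset_eq_filter]
  have hsum : ∑ v, degOn G Finset.univ v = 2 * Nat.card G.edgeSet := by
    simp only [hdeg]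
    rw [SimpleGraph.sum_degrees_eq_twice_card_edges]
    congr 1
    rw [Nat.card_eq_fintype_card, SimpleGraph.edgeFinset_card]
  -- Counting: r * |B| ≤ sum of degrees
  have hBsum : r * B.card ≤ ∑ v, degOn G Finset.univ v := by
    calc r * B.card = ∑ _v ∈ B, r := by rw [Finset.sum_const, smul_eq_mul, mul_comm]
      _ ≤ ∑ v ∈ B, degOn G Finset.univ v := by
          apply Finset.sum_le_sum
          intro v hv
          exact (Finset.mem_filter.mp hv).2
      _ ≤ ∑ v, degOn G Finset.univ v :=
          Finset.sum_le_sum_of_subset (Finset.subset_univ B)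
  -- Real bound on |B|
  have hrpow : (n : ℝ) ^ (1 + β) = (n : ℝ) ^ α * (n : ℝ) ^ α := by
    rw [← Real.rpow_add hn0]
    congr 1
    rw [hα_def]; ring
  have hBle : (B.card : ℝ) ≤ 2 * c * (n : ℝ) ^ α := by
    have h1 : (n : ℝ) ^ α * (B.card : ℝ) ≤ 2 * c * ((n : ℝ) ^ α * (n : ℝ) ^ α) := by
      calc (n : ℝ) ^ α * (B.card : ℝ) ≤ (r : ℝ) * (B.card : ℝ) := by
            apply mul_le_mul_of_nonneg_right hrx (Nat.cast_nonneg _)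
        _ ≤ (∑ v, degOn G Finset.univ v : ℕ) := by exact_mod_cast hBsum
        _ = 2 * (Nat.card G.edgeSet : ℝ) := by rw [hsum]; push_cast; ring
        _ ≤ 2 * (c * (n : ℝ) ^ (1 + β)) := by linarith
        _ = 2 * c * ((n : ℝ) ^ α * (n : ℝ) ^ α) := by rw [hrpow]; ring
    have h2 : (n : ℝ) ^ α * (B.card : ℝ) ≤ (n : ℝ) ^ α * (2 * c * (n : ℝ) ^ α) := by
      calc (n : ℝ) ^ α * (B.card : ℝ) ≤ 2 * c * ((n : ℝ) ^ α * (n : ℝ) ^ α) := h1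
        _ = (n : ℝ) ^ α * (2 * c * (n : ℝ) ^ α) := by ring
    exact le_of_mul_le_mul_left h2 hx0
  -- Max degree on univ \ B is small
  have hmax : maxDegOn G (Finset.univ \ B) ≤ r - 1 := by
    apply Finset.sup_le
    intro v hv
    have hvB : v ∉ B := (Finset.mem_sdiff.mp hv).2
    have hv1 : ¬ (r ≤ degOn G Finset.univ v) := by
      intro h; exact hvB (Finset.mem_filter.mpr ⟨Finset.mem_univ v, h⟩)
    have h2 : degOn G (Finset.univ \ B) v ≤ degOn G Finset.univ v :=
      degOn_mono G (Finset.sdiff_subset) v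
    omega
  -- Combine
  have hk0 : 0 < k := by omega
  have hfk : fk G k ≤ B.card + (k - 1) * (r - 1) := by
    calc fk G k = fkOn G k Finset.univ := rfl
      _ ≤ B.card + fkOn G k (Finset.univ \ B) :=
          fkOn_le_add G k hk0 (Finset.subset_univ B)
      _ ≤ B.card + (k - 1) * (r - 1) :=
          Nat.add_le_add_left (fkOn_le_aux G k hk0 (r - 1) _ hmax) _
  have hfkR : (fk G k : ℝ) ≤ (B.card : ℝ) + ((k : ℝ) - 1) * ((r : ℝ) - 1) := by
    have : ((fk G k : ℕ) : ℝ) ≤ ((B.card + (k - 1) * (r - 1) : ℕ) : ℝ) := by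
      exact_mod_cast hfk
    calc (fk G k : ℝ) ≤ ((B.card + (k - 1) * (r - 1) : ℕ) : ℝ) := this
      _ = (B.card : ℝ) + ((k : ℝ) - 1) * ((r : ℝ) - 1) := by
          rw [Nat.cast_add, Nat.cast_mul, Nat.cast_sub (by omega : 1 ≤ k),
            Nat.cast_sub hr1]
          push_cast; ring
  have hk1 : (0 : ℝ) ≤ (k : ℝ) - 1 := by
    have : (2 : ℝ) ≤ (k : ℝ) := by exact_mod_cast hk
    linarith
  calc (fk G k : ℝ) ≤ (B.card : ℝ) + ((k : ℝ) - 1) * ((r : ℝ) - 1) := hfkR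
    _ ≤ 2 * c * (n : ℝ) ^ α + ((k : ℝ) - 1) * ((n : ℝ) ^ α) := by
        have h1 : ((k : ℝ) - 1) * ((r : ℝ) - 1) ≤ ((k : ℝ) - 1) * ((n : ℝ) ^ α) := by
          apply mul_le_mul_of_nonneg_left _ hk1
          linarith
        linarith
    _ = ((k : ℝ) - 1 + 2 * c) * (n : ℝ) ^ α := by ring
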